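/- Let θ be an inner function and φ, ψ ∈ H∞, and set S = T_φ P_{θH²(𝕋)} + T_ψ P_{𝒦_θ} ∈ B(H²(𝕋)). Then S(θH²(𝕋)) ⊆ θH²(𝕋), and the commutator satisfies S T_z − T_z S = (S − T_ψ) P_{θH²(𝕋)} T_z P_{𝒦_θ}. -/

import Mathlib

open MeasureTheory Complex AddCircle
open scoped InnerProductSpace ENNReal Real

noncomputable section

namespace PaperTH

instance fact2pi : Fact (0 < 2 * Real.pi) := ⟨by positivity⟩

/-- The circle, as `ℝ / 2πℤ`. -/
abbrev 𝕋c := AddCircle (2 * Real.pi)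

/-- The normalized Lebesgue (Haar) measure on the circle. -/
abbrev μc : Measure 𝕋c := haarAddCircle

/-- `L²(𝕋)`. -/
abbrev L2 := Lp ℂ 2 μc

/-- The Hardy space `H²(𝕋)`: members of `L²(𝕋)` all of whose Fourier coefficients of
negative index vanish. -/
def Hardy : Submodule ℂ L2 where
  carrier := {f | ∀ n : ℤ, n < 0 → fourierCoeff (⇑f) n = 0}
  add_mem' := by
    intro f g hf hg n hn
    have hf' := hf n hn
    have hg' := hg n hn
    rw [← fourierBasis_repr] at hf' hg' ⊢
    rw [map_add, lp.coeFn_add, Pi.add_apply, hf', hg', add_zero]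
  zero_mem' := by
    intro n hn
    rw [← fourierBasis_repr, map_zero, lp.coeFn_zero, Pi.zero_apply]
  smul_mem' := by
    intro c f hf n hn
    have hf' := hf n hn
    rw [← fourierBasis_repr] at hf' ⊢
    rw [_root_.map_smul, lp.coeFn_smul, Pi.smul_apply, hf', smul_zero]

theorem isClosed_Hardy : IsClosed (Hardy : Set L2) := by
  have h : (Hardy : Set L2) =
      ⋂ (n : ℤ) (_ : n < 0), ((innerSL ℂ (fourierBasis n)) ⁻¹' {(0 : ℂ)}) := by
    ext f
    simp only [Set.mem_iInter, Set.mem_preimage, Set.mem_singleton_iff, SetLike.mem_coe]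
    constructor
    · intro hf n hn
      have := hf n hn
      rw [← fourierBasis_repr, fourierBasis.repr_apply_apply] at this
      simpa using this
    · intro hf n hn
      have := hf n hn
      rw [← fourierBasis_repr, fourierBasis.repr_apply_apply]
      simpa using this
  rw [h]
  exact isClosed_iInter fun n => isClosed_iInter fun _ =>
    (isClosed_singleton).preimage (innerSL ℂ (fourierBasis n)).continuous

instance : CompleteSpace Hardy := isClosed_Hardy.completeSpace_coe

/-- The Szegő projection `P₊ : L²(𝕋) → L²(𝕋)` onto the Hardy space. -/
def Pplus : L2 →L[ℂ] L2 := Hardy.subtypeL.comp (Submodule.orthogonalProjectionOnto Hardy)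

/-- `P₋ = I - P₊`. -/
def Pminus : L2 →L[ℂ] L2 := ContinuousLinearMap.id ℂ L2 - Pplus

/-- Underlying function of the multiplication operator. -/
def MopFun (φ : 𝕋c → ℂ) (hφ : MemLp φ ∞ μc) (f : L2) : L2 :=
  ((Lp.memLp f).smul (r := 2) hφ).toLp (φ • ⇑f)

theorem MopFun_coeFn (φ : 𝕋c → ℂ) (hφ : MemLp φ ∞ μc) (f : L2) :
    ⇑(MopFun φ hφ f) =ᵐ[μc] φ • ⇑f := MemLp.coeFn_toLp _

theorem MopFun_add (φ : 𝕋c → ℂ) (hφ : MemLp φ ∞ μc) (f g : L2) :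
    MopFun φ hφ (f + g) = MopFun φ hφ f + MopFun φ hφ g := by
  apply Lp.ext
  filter_upwards [MopFun_coeFn φ hφ (f + g), MopFun_coeFn φ hφ f, MopFun_coeFn φ hφ g,
    Lp.coeFn_add f g, Lp.coeFn_add (MopFun φ hφ f) (MopFun φ hφ g)] with x h1 h2 h3 h4 h5
  simp only [h1, h5, Pi.add_apply, h2, h3, Pi.smul_apply, Pi.mul_apply, smul_eq_mul, h4]
  ring

theorem MopFun_smul (φ : 𝕋c → ℂ) (hφ : MemLp φ ∞ μc) (c : ℂ) (f : L2) :
    MopFun φ hφ (c • f) = c • MopFun φ hφ f := by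
  apply Lp.ext
  filter_upwards [MopFun_coeFn φ hφ (c • f), MopFun_coeFn φ hφ f,
    Lp.coeFn_smul c f, Lp.coeFn_smul c (MopFun φ hφ f)] with x h1 h2 h3 h4
  simp only [h1, h4, Pi.smul_apply, Pi.mul_apply, h2, h3, smul_eq_mul]
  ring

theorem MopFun_norm (φ : 𝕋c → ℂ) (hφ : MemLp φ ∞ μc) (f : L2) :
    ‖MopFun φ hφ f‖ ≤ (eLpNorm φ ∞ μc).toReal * ‖f‖ := by
  have hrfl : MopFun φ hφ f = ((Lp.memLp f).smul (r := 2) hφ).toLp (φ • ⇑f) := rfl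
  rw [hrfl, Lp.norm_toLp (φ • ⇑f) ((Lp.memLp f).smul (r := 2) hφ), Lp.norm_def]
  have hb : eLpNorm (φ • ⇑f) 2 μc ≤ eLpNorm φ ∞ μc * eLpNorm (⇑f) 2 μc :=
    eLpNorm_smul_le_eLpNorm_top_mul_eLpNorm 2 (Lp.aestronglyMeasurable f) φ
  have hfin : eLpNorm φ ∞ μc * eLpNorm (⇑f) 2 μc ≠ ∞ :=
    ENNReal.mul_ne_top hφ.eLpNorm_ne_top (Lp.eLpNorm_ne_top f)
  calc (eLpNorm (φ • ⇑f) 2 μc).toReal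
      ≤ (eLpNorm φ ∞ μc * eLpNorm (⇑f) 2 μc).toReal := ENNReal.toReal_mono hfin hb
    _ = (eLpNorm φ ∞ μc).toReal * (eLpNorm (⇑f) 2 μc).toReal := ENNReal.toReal_mul

/-- The multiplication (Laurent) operator `M_φ` on `L²(𝕋)` with symbol `φ ∈ L∞(𝕋)`. -/
def Mop (φ : 𝕋c → ℂ) (hφ : MemLp φ ∞ μc) : L2 →L[ℂ] L2 :=
  LinearMap.mkContinuous
    { toFun := MopFun φ hφ
      map_add' := MopFun_add φ hφ
      map_smul' := MopFun_smul φ hφ }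
    (eLpNorm φ ∞ μc).toReal
    (fun f => MopFun_norm φ hφ f)

theorem Mop_coeFn (φ : 𝕋c → ℂ) (hφ : MemLp φ ∞ μc) (f : L2) :
    ⇑(Mop φ hφ f) =ᵐ[μc] fun x => φ x * f x :=
  MopFun_coeFn φ hφ f

/-- The conjugation operator `J : L²(𝕋) → L²(𝕋)`, `(Jf)(z) = f(z̄)`
(composition with `x ↦ -x` on the additive circle). -/
def Jop : L2 →L[ℂ] L2 :=
  LinearMap.mkContinuous
    { toFun := fun f =>
        Lp.compMeasurePreserving (fun x : 𝕋c => -x) (Measure.measurePreserving_neg μc) f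
      map_add' := by
        intro f g
        exact map_add (Lp.compMeasurePreserving _ (Measure.measurePreserving_neg μc)) f g
      map_smul' := by
        intro c f
        apply Lp.ext
        simp only [RingHom.id_apply]
        have hmp := Measure.measurePreserving_neg (μ := μc)
        have h1 := Lp.coeFn_compMeasurePreserving (μ := μc) (c • f) hmp
        have h2 := Lp.coeFn_compMeasurePreserving (μ := μc) f hmp
        have h3 : ⇑(c • f) ∘ (fun x : 𝕋c => -x) =ᵐ[μc] (c • ⇑f) ∘ (fun x : 𝕋c => -x) :=
          hmp.quasiMeasurePreserving.ae_eq_comp (Lp.coeFn_smul c f)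
        have h4 : (c • ⇑f) ∘ (fun x : 𝕋c => -x) = c • (⇑f ∘ fun x : 𝕋c => -x) := rfl
        have h5 : c • (⇑f ∘ fun x : 𝕋c => -x) =ᵐ[μc]
            c • ⇑(Lp.compMeasurePreserving (fun x : 𝕋c => -x) hmp f) :=
          h2.symm.const_smul c
        exact ((h1.trans h3).trans ((h4 ▸ h5 : _))).trans (Lp.coeFn_smul c _).symm }
    1
    (by
      intro f
      simp only [LinearMap.coe_mk, AddHom.coe_mk, one_mul]
      exact le_of_eq (Lp.norm_compMeasurePreserving f _))

/-- The Toeplitz operator `T_φ = P₊ M_φ |_{H²}` with symbol `φ ∈ L∞(𝕋)`. -/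
def Toep (φ : 𝕋c → ℂ) (hφ : MemLp φ ∞ μc) : Hardy →L[ℂ] Hardy :=
  (Submodule.orthogonalProjectionOnto Hardy).comp ((Mop φ hφ).comp Hardy.subtypeL)

/-- The Hankel operator `H_φ = P₊ M_φ J |_{H²}` with symbol `φ ∈ L∞(𝕋)`. -/
def Hank (φ : 𝕋c → ℂ) (hφ : MemLp φ ∞ μc) : Hardy →L[ℂ] Hardy :=
  (Submodule.orthogonalProjectionOnto Hardy).comp ((Mop φ hφ).comp (Jop.comp Hardy.subtypeL))

/-- The coordinate function `z` on the circle. -/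
def zFun : 𝕋c → ℂ := fun x => fourier 1 x

theorem zFun_memℒp : MemLp zFun ∞ μc := by
  refine memLp_top_of_bound ((fourier 1).continuous.aestronglyMeasurable) 1
    (Filter.Eventually.of_forall fun x => ?_)
  simp only [zFun, fourier_apply, Circle.norm_coe, le_refl]

/-- The unilateral shift `T_z`. -/
def Tz : Hardy →L[ℂ] Hardy := Toep zFun zFun_memℒp

/-- The bilateral shift `M_z` on `L²(𝕋)`. -/
def Mz : L2 →L[ℂ] L2 := Mop zFun zFun_memℒp

/-- `A` is a Toeplitz + Hankel operator. -/
def IsToepPlusHank (A : Hardy →L[ℂ] Hardy) : Prop :=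
  ∃ (φ ψ : 𝕋c → ℂ) (hφ : MemLp φ ∞ μc) (hψ : MemLp ψ ∞ μc), A = Toep φ hφ + Hank ψ hψ

/-- `φ` belongs to `H^∞`: it is essentially bounded and all its negative Fourier
coefficients vanish. -/
def IsHinf (φ : 𝕋c → ℂ) : Prop :=
  MemLp φ ∞ μc ∧ ∀ n : ℤ, n < 0 → fourierCoeff φ n = 0

/-- `θ` is an inner function: `θ ∈ H^∞` and `|θ| = 1` a.e. on the circle. -/
def IsInner (θ : 𝕋c → ℂ) : Prop :=
  IsHinf θ ∧ ∀ᵐ x ∂μc, ‖θ x‖ = 1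

theorem Mop_norm_of_inner {θ : 𝕋c → ℂ} (hθ : IsInner θ) (f : L2) :
    ‖Mop θ hθ.1.1 f‖ = ‖f‖ := by
  have h1 : ⇑(Mop θ hθ.1.1 f) =ᵐ[μc] θ • ⇑f := MopFun_coeFn θ hθ.1.1 f
  rw [Lp.norm_def, Lp.norm_def]
  congr 1
  rw [eLpNorm_congr_ae h1]
  apply eLpNorm_congr_norm_ae
  filter_upwards [hθ.2] with x hx
  simp [norm_smul, hx]

/-- The (Beurling-type) subspace `θ H²` of the Hardy space, for an inner function `θ`. -/
def thetaSub (θ : 𝕋c → ℂ) (hθ : IsInner θ) : Submodule ℂ Hardy where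
  carrier := {f | ∃ g : Hardy, (f : L2) = Mop θ hθ.1.1 (g : L2)}
  add_mem' := by
    rintro f f' ⟨g, hg⟩ ⟨g', hg'⟩
    exact ⟨g + g', by
      simp only [Submodule.coe_add, hg, hg']
      rw [← map_add]⟩
  zero_mem' := ⟨0, by simp⟩
  smul_mem' := by
    rintro c f ⟨g, hg⟩
    exact ⟨c • g, by
      rw [Submodule.coe_smul, hg, ← (Mop θ hθ.1.1).map_smul]
      rfl⟩

theorem isClosed_thetaSub (θ : 𝕋c → ℂ) (hθ : IsInner θ) :
    IsClosed ((thetaSub θ hθ) : Set Hardy) := by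
  have hiso : Isometry (fun g : Hardy => Mop θ hθ.1.1 (g : L2)) := by
    apply Isometry.of_dist_eq
    intro g g'
    rw [dist_eq_norm, dist_eq_norm, ← map_sub, ← Submodule.coe_sub, Mop_norm_of_inner hθ]
    rfl
  have hrange : IsClosed (Set.range fun g : Hardy => Mop θ hθ.1.1 (g : L2)) :=
    hiso.isClosedEmbedding.isClosed_range
  have hset : ((thetaSub θ hθ) : Set Hardy) =
      (Subtype.val) ⁻¹' (Set.range fun g : Hardy => Mop θ hθ.1.1 (g : L2)) := by
    ext f
    constructor
    · rintro ⟨g, hg⟩; exact ⟨g, hg.symm⟩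
    · rintro ⟨g, hg⟩; exact ⟨g, hg.symm⟩
  rw [hset]
  exact hrange.preimage continuous_subtype_val

/-- The model space `𝒦_θ = H² ⊖ θH²`. -/
def modelSpace (θ : 𝕋c → ℂ) (hθ : IsInner θ) : Submodule ℂ Hardy := (thetaSub θ hθ)ᗮ

/-- The orthogonal projection of `H²` onto `θH²`. -/
def Ptheta (θ : 𝕋c → ℂ) (hθ : IsInner θ) : Hardy →L[ℂ] Hardy :=
  haveI : CompleteSpace (thetaSub θ hθ) := (isClosed_thetaSub θ hθ).completeSpace_coe
  (thetaSub θ hθ).subtypeL.comp (Submodule.orthogonalProjectionOnto (thetaSub θ hθ))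

/-- The orthogonal projection of `H²` onto the model space `𝒦_θ`. -/
def Pmodel (θ : 𝕋c → ℂ) (hθ : IsInner θ) : Hardy →L[ℂ] Hardy :=
  haveI hc : CompleteSpace (thetaSub θ hθ) := (isClosed_thetaSub θ hθ).completeSpace_coe
  haveI h2 : Submodule.HasOrthogonalProjection (modelSpace θ hθ) :=
    (inferInstance : Submodule.HasOrthogonalProjection (thetaSub θ hθ)ᗮ)
  (modelSpace θ hθ).subtypeL.comp (Submodule.orthogonalProjectionOnto (modelSpace θ hθ))

/-- The monomial `z^k`, as an element of the Hardy space. -/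
def monoH (k : ℕ) : Hardy :=
  ⟨fourierLp 2 (k : ℤ), by
    intro n hn
    rw [← fourierBasis_repr]
    have hb : (fourierLp 2 (k : ℤ) : L2) = fourierBasis (k : ℤ) := by rw [coe_fourierBasis]
    rw [hb, fourierBasis.repr_self]
    exact lp.single_apply_ne 2 (k : ℤ) _ (by omega)⟩

/-- `T_z^*`, the adjoint of the unilateral shift. -/
def TzStar : Hardy →L[ℂ] Hardy := ContinuousLinearMap.adjoint Tz

/-- `M_z^*`, the adjoint of the bilateral shift. -/
def MzStar : L2 →L[ℂ] L2 := ContinuousLinearMap.adjoint Mz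

/-- The constant function `1` as an element of `L²(𝕋)`. -/
def oneL2 : L2 := (memLp_const (1 : ℂ)).toLp (fun _ => (1 : ℂ))

/-- The function `z̄ = conj z` on the circle. -/
def zbarFun : 𝕋c → ℂ := fun x => fourier (-1) x

theorem zbarFun_memℒp : MemLp zbarFun ∞ μc := by
  refine memLp_top_of_bound ((fourier (-1)).continuous.aestronglyMeasurable) 1
    (Filter.Eventually.of_forall fun x => ?_)
  simp only [zbarFun, fourier_apply, Circle.norm_coe, le_refl]

/-- The function `z̄` as an element of `L²(𝕋)`. -/
def zbarL2 : L2 := (zbarFun_memℒp.mono_exponent le_top).toLp zbarFun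

theorem zbarsq_memℒp {ψ : 𝕋c → ℂ} (hψ : MemLp ψ ∞ μc) :
    MemLp (fun x : 𝕋c => ((starRingEnd ℂ) (zFun x) ^ 2 - 1) * ψ x) ∞ μc := by
  have hc : Continuous fun x : 𝕋c => (starRingEnd ℂ) (zFun x) ^ 2 - 1 := by
    have h1 : Continuous (zFun) := (fourier 1).continuous
    exact ((h1.star.pow 2).sub continuous_const)
  have hb : MemLp (fun x : 𝕋c => (starRingEnd ℂ) (zFun x) ^ 2 - 1) ∞ μc := by
    refine memLp_top_of_bound hc.aestronglyMeasurable 2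
      (Filter.Eventually.of_forall fun x => ?_)
    calc ‖(starRingEnd ℂ) (zFun x) ^ 2 - 1‖ ≤ ‖(starRingEnd ℂ) (zFun x) ^ 2‖ + ‖(1 : ℂ)‖ :=
          norm_sub_le _ _
      _ ≤ 2 := by
          rw [norm_pow, RCLike.norm_conj]
          simp only [zFun, fourier_apply, Circle.norm_coe, norm_one]
          norm_num
  have h2 := hψ.smul (r := ∞) hb
  have h3 : ((fun x : 𝕋c => (starRingEnd ℂ) (zFun x) ^ 2 - 1) • ψ) =
      fun x : 𝕋c => ((starRingEnd ℂ) (zFun x) ^ 2 - 1) * ψ x := by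
    funext x
    simp only [Pi.smul_apply, smul_eq_mul, Pi.mul_apply]
  exact h3 ▸ h2

/-- `A` is `θ`-paired: `A = T_φ P_{θH²} + T_ψ P_{𝒦_θ}` for some `φ, ψ ∈ H^∞`. -/
def IsThetaPaired (θ : 𝕋c → ℂ) (hθ : IsInner θ) (X : Hardy →L[ℂ] Hardy) : Prop :=
  ∃ (φ ψ : 𝕋c → ℂ) (hφ : IsHinf φ) (hψ : IsHinf ψ),
    X = (Toep φ hφ.1).comp (Ptheta θ hθ) + (Toep ψ hψ.1).comp (Pmodel θ hθ)


/-!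
For `φ ∈ H∞` the Toeplitz operator `T_φ` is plain multiplication by `φ` on `H²`: the Fourier
coefficients of `φ f` are the convolution `∑ₘ φ̂(n - m) f̂(m)`, which vanishes for `n < 0`.
Hence these operators commute with one another, in particular with `T_z`, and leave `θH²`
invariant. Writing `P = P_{θH²}`, we have `P_{𝒦_θ} = 1 - P` and `P T_z P = T_z P`, and the
commutator formula becomes an identity in an arbitrary ring.
-/

theorem commutator_mul_add_mul_one_sub {R : Type*} [Ring R] {p t a b : R}
    (hp : IsIdempotentElem p) (hpt : p * t * p = t * p) (ha : Commute a t) (hb : Commute b t) :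
    (a * p + b * (1 - p)) * t - t * (a * p + b * (1 - p)) =
      (a * p + b * (1 - p) - b) * p * (t * (1 - p)) := by
  have hta : t * (a * p + b * (1 - p)) = a * (t * p) + b * (t * (1 - p)) := by
    rw [mul_add, ← mul_assoc, ← mul_assoc, ← ha.eq, ← hb.eq, mul_assoc, mul_assoc]
  calc (a * p + b * (1 - p)) * t - t * (a * p + b * (1 - p))
      = (a - b) * (p * t - t * p) := by rw [hta]; noncomm_ring
    _ = (a - b) * (p * t * (1 - p)) := by rw [← hpt]; noncomm_ring
    _ = (a - b) * (p * p) * (t * (1 - p)) := by rw [hp.eq]; noncomm_ring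
    _ = (a * p + b * (1 - p) - b) * p * (t * (1 - p)) := by noncomm_ring

theorem memLp_conj_mul_fourier {T : ℝ} [Fact (0 < T)] {φ : AddCircle T → ℂ}
    (hφ : MemLp φ ∞ haarAddCircle) (n : ℤ) :
    MemLp (fun x => starRingEnd ℂ (φ x) * fourier n x) 2 haarAddCircle :=
  (Lp.memLp (fourierLp 2 n)).ae_eq (coeFn_fourierLp 2 n) |>.mul' hφ.star

theorem fourierCoeff_conj_mul_fourier {T : ℝ} [Fact (0 < T)] (φ : AddCircle T → ℂ)
    (n m : ℤ) :
    fourierCoeff (fun x => starRingEnd ℂ (φ x) * fourier n x) m =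
      starRingEnd ℂ (fourierCoeff φ (n - m)) := by
  rw [fourierCoeff, fourierCoeff, ← integral_conj]
  refine integral_congr_ae (.of_forall fun x => ?_)
  simp only [smul_eq_mul, map_mul, ← fourier_neg, neg_neg,
    show n - m = -m + n by ring, fourier_add]
  ring

theorem fourierCoeff_Mop (φ : 𝕋c → ℂ) (hφ : MemLp φ ∞ μc) (f : L2) (n : ℤ) :
    fourierCoeff (⇑(Mop φ hφ f)) n =
      ∑' m, fourierCoeff φ (n - m) * fourierCoeff (⇑f) m := by
  set g : L2 := (memLp_conj_mul_fourier hφ n).toLp _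
  have hcoe : ⇑g =ᵐ[μc] fun x => starRingEnd ℂ (φ x) * fourier n x := MemLp.coeFn_toLp _
  have hinner : fourierCoeff (⇑(Mop φ hφ f)) n = ⟪g, f⟫_ℂ := by
    rw [L2.inner_def, fourierCoeff]
    refine integral_congr_ae ?_
    filter_upwards [Mop_coeFn φ hφ f, hcoe] with x hMx hgx
    rw [hMx, RCLike.inner_apply, hgx, map_mul, Complex.conj_conj, smul_eq_mul, ← fourier_neg]
    ring
  have hcoeff (u : L2) (m : ℤ) : ⟪fourierBasis m, u⟫_ℂ = fourierCoeff (⇑u) m := by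
    rw [← fourierBasis.repr_apply_apply, fourierBasis_repr]
  rw [hinner, ← fourierBasis.tsum_inner_mul_inner g f]
  refine tsum_congr fun m => ?_
  rw [← inner_conj_symm, hcoeff, hcoeff, fourierCoeff_congr_ae hcoe,
    fourierCoeff_conj_mul_fourier, Complex.conj_conj]

theorem Mop_mem_Hardy {φ : 𝕋c → ℂ} (hφ : IsHinf φ) {f : L2} (hf : f ∈ Hardy) :
    Mop φ hφ.1 f ∈ Hardy := by
  intro n hn
  rw [fourierCoeff_Mop]
  refine (tsum_congr fun m => ?_).trans tsum_zero
  rcases lt_or_ge m 0 with hm | hm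
  · rw [hf m hm, mul_zero]
  · rw [hφ.2 (n - m) (by omega), zero_mul]

theorem Toep_coe_of_isHinf {φ : 𝕋c → ℂ} (hφ : IsHinf φ) (f : Hardy) :
    (Toep φ hφ.1 f : L2) = Mop φ hφ.1 f :=
  Submodule.starProjection_eq_self_iff.mpr (Mop_mem_Hardy hφ f.2)

theorem Mop_commute (φ ψ : 𝕋c → ℂ) (hφ : MemLp φ ∞ μc) (hψ : MemLp ψ ∞ μc) :
    Commute (Mop φ hφ) (Mop ψ hψ) := by
  ext1 f
  apply Lp.ext
  filter_upwards [Mop_coeFn φ hφ (Mop ψ hψ f), Mop_coeFn ψ hψ f,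
    Mop_coeFn ψ hψ (Mop φ hφ f), Mop_coeFn φ hφ f] with x hφψ hψ' hψφ hφ'
  rw [mul_apply_eq_comp, mul_apply_eq_comp, hφψ, hψ', hψφ, hφ']
  ring

theorem Toep_commute_of_isHinf {φ ψ : 𝕋c → ℂ} (hφ : IsHinf φ) (hψ : IsHinf ψ) :
    Commute (Toep φ hφ.1) (Toep ψ hψ.1) := by
  ext1 f
  apply Subtype.ext
  rw [mul_apply_eq_comp, mul_apply_eq_comp, Toep_coe_of_isHinf hφ, Toep_coe_of_isHinf hψ,
    Toep_coe_of_isHinf hψ, Toep_coe_of_isHinf hφ]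
  exact DFunLike.congr_fun (Mop_commute φ ψ hφ.1 hψ.1) (f : L2)

theorem zFun_isHinf : IsHinf zFun :=
  ⟨zFun_memℒp, fun n hn => by
    rw [show zFun = fourier 1 from rfl, fourierCoeff_fourier, Pi.single_apply,
      if_neg (by omega)]⟩

theorem thetaSub_mem_invtSubmodule_Toep (θ : 𝕋c → ℂ) (hθ : IsInner θ) {η : 𝕋c → ℂ}
    (hη : IsHinf η) :
    thetaSub θ hθ ∈ Module.End.invtSubmodule (Toep η hη.1 : Hardy →ₗ[ℂ] Hardy) := by
  rw [Module.End.mem_invtSubmodule_iff_forall_mem_of_mem]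
  rintro f ⟨g, hg⟩
  refine ⟨⟨Mop η hη.1 g, Mop_mem_Hardy hη g.2⟩, ?_⟩
  rw [ContinuousLinearMap.coe_coe, Toep_coe_of_isHinf hη f, hg]
  exact DFunLike.congr_fun (Mop_commute η θ hη.1 hθ.1.1) (g : L2)

instance (θ : 𝕋c → ℂ) (hθ : IsInner θ) : CompleteSpace (thetaSub θ hθ) :=
  (isClosed_thetaSub θ hθ).completeSpace_coe

theorem Ptheta_eq_starProjection (θ : 𝕋c → ℂ) (hθ : IsInner θ) :
    Ptheta θ hθ = (thetaSub θ hθ).starProjection :=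
  rfl

theorem Pmodel_eq_one_sub_Ptheta (θ : 𝕋c → ℂ) (hθ : IsInner θ) :
    Pmodel θ hθ = 1 - Ptheta θ hθ :=
  (thetaSub θ hθ).starProjection_orthogonal

theorem Ptheta_mul_Toep_mul_Ptheta (θ : 𝕋c → ℂ) (hθ : IsInner θ) {η : 𝕋c → ℂ}
    (hη : IsHinf η) :
    Ptheta θ hθ * Toep η hη.1 * Ptheta θ hθ = Toep η hη.1 * Ptheta θ hθ := by
  have hrange : (thetaSub θ hθ).starProjection.range ∈
      Module.End.invtSubmodule (Toep η hη.1 : Hardy →ₗ[ℂ] Hardy) := by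
    rw [Submodule.range_starProjection]
    exact thetaSub_mem_invtSubmodule_Toep θ hθ hη
  rw [Ptheta_eq_starProjection]
  exact (ContinuousLinearMap.IsIdempotentElem.range_mem_invtSubmodule_iff
    (thetaSub θ hθ).isIdempotentElem_starProjection).mp hrange

/-- **Theorem.** For an inner function `θ` and `φ, ψ ∈ H∞`, the `θ`-paired operator
`S = T_φ P_{θH²} + T_ψ P_{𝒦_θ}` leaves `θH²` invariant and satisfies
`S T_z - T_z S = (S - T_ψ) P_{θH²} T_z P_{𝒦_θ}`. -/
theorem theta_paired_properties (θ : 𝕋c → ℂ) (hθ : IsInner θ)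
    (φ ψ : 𝕋c → ℂ) (hφ : IsHinf φ) (hψ : IsHinf ψ) :
    (∀ f : Hardy, f ∈ thetaSub θ hθ →
        ((Toep φ hφ.1).comp (Ptheta θ hθ) + (Toep ψ hψ.1).comp (Pmodel θ hθ)) f ∈
          thetaSub θ hθ) ∧
      ((Toep φ hφ.1).comp (Ptheta θ hθ) + (Toep ψ hψ.1).comp (Pmodel θ hθ)).comp Tz -
          Tz.comp ((Toep φ hφ.1).comp (Ptheta θ hθ) + (Toep ψ hψ.1).comp (Pmodel θ hθ)) =
        ((((Toep φ hφ.1).comp (Ptheta θ hθ) + (Toep ψ hψ.1).comp (Pmodel θ hθ)) -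
            Toep ψ hψ.1).comp (Ptheta θ hθ)).comp (Tz.comp (Pmodel θ hθ)) := by
  simp only [← ContinuousLinearMap.mul_def, Pmodel_eq_one_sub_Ptheta]
  constructor
  · intro f hf
    have hPf : Ptheta θ hθ f = f := Submodule.starProjection_eq_self_iff.mpr hf
    simp only [add_apply, mul_apply_eq_comp, sub_apply, one_apply_eq_self, hPf, sub_self,
      map_zero, add_zero]
    exact thetaSub_mem_invtSubmodule_Toep θ hθ hφ hf
  · exact commutator_mul_add_mul_one_sub (thetaSub θ hθ).isIdempotentElem_starProjection
      (Ptheta_mul_Toep_mul_Ptheta θ hθ zFun_isHinf) (Toep_commute_of_isHinf hφ zFun_isHinf)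
      (Toep_commute_of_isHinf hψ zFun_isHinf)

end PaperTH
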